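/- With 𝓕^pre(a,c) = (1/24)·log((1+a²q²-2a²q⁴)⁴/((1+a²q²)⁴(1-q²)³(1-a⁴q⁶))), where q = q(a) solves the cubic constraint, one has d/da 𝓕^pre(a,c) = -q²(1-a⁴q⁴)²/(8a(1-q²)(1-a⁴q⁶)²). -/

import Mathlib

/-- The pre-critical constant `𝓕^pre(a,c)` as a function of `a`, `q = q(a)`. -/
noncomputable def Fpre (a q : ℝ) : ℝ :=
  (1/24) * Real.log ((1 + a ^ 2 * q ^ 2 - 2 * a ^ 2 * q ^ 4) ^ 4
    / ((1 + a ^ 2 * q ^ 2) ^ 4 * (1 - q ^ 2) ^ 3 * (1 - a ^ 4 * q ^ 6)))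

/-- Derivative of the pre-critical constant term:
`d/da 𝓕^pre(a,c) = -q²(1-a⁴q⁴)²/(8a(1-q²)(1-a⁴q⁶)²)`. -/
theorem deriv_Fpre (c : ℝ) (hc : 0 < c) (q : ℝ → ℝ) (a q' : ℝ)
    (s : Set ℝ) (hs : IsOpen s) (has : a ∈ s)
    (hpos : ∀ x ∈ s, 0 < x ∧ 0 < q x ∧ q x < 1)
    (hcubic : ∀ x ∈ s,
      q x ^ 6 - ((x ^ 2 + 4 * c + 2) / (2 * x ^ 2)) * q x ^ 4 + 1 / (2 * x ^ 4) = 0)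
    (hq : HasDerivAt q q' a)
    (h1 : ∀ x ∈ s, 0 < 1 - x ^ 4 * q x ^ 6)
    (h2 : ∀ x ∈ s, 0 < 1 + x ^ 2 * q x ^ 2 - 2 * x ^ 2 * q x ^ 4) :
    HasDerivAt (fun x => Fpre x (q x))
      (-(q a ^ 2 * (1 - a ^ 4 * q a ^ 4) ^ 2)
        / (8 * a * (1 - q a ^ 2) * (1 - a ^ 4 * q a ^ 6) ^ 2)) a := by
  obtain ⟨ha, hqa, hqa1⟩ := hpos a has
  have ha' : a ≠ 0 := ne_of_gt ha
  have hCpos : 0 < 1 - q a ^ 2 := by nlinarith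
  have hBpos : 0 < 1 + a ^ 2 * q a ^ 2 := by positivity
  have hApos := h2 a has
  have hEpos := h1 a has
  -- building blocks
  have hx2 : HasDerivAt (fun x : ℝ => x ^ 2) (2 * a) a := by
    simpa using hasDerivAt_pow 2 a
  have hx4 : HasDerivAt (fun x : ℝ => x ^ 4) (4 * a ^ 3) a := by
    simpa using hasDerivAt_pow 4 a
  have hq2 : HasDerivAt (fun x => q x ^ 2) (2 * q a * q') a := by
    simpa using hq.fun_pow 2
  have hq4 : HasDerivAt (fun x => q x ^ 4) (4 * q a ^ 3 * q') a := by
    simpa using hq.fun_pow 4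
  have hq6 : HasDerivAt (fun x => q x ^ 6) (6 * q a ^ 5 * q') a := by
    simpa using hq.fun_pow 6
  -- implicit differentiation of the cubic constraint
  have hg : HasDerivAt (fun x => 2 * x ^ 4 * q x ^ 6 - (x ^ 4 + (4 * c + 2) * x ^ 2) * q x ^ 4 + 1)
      (2 * (4 * a ^ 3) * q a ^ 6 + 2 * a ^ 4 * (6 * q a ^ 5 * q')
        - ((4 * a ^ 3 + (4 * c + 2) * (2 * a)) * q a ^ 4
          + (a ^ 4 + (4 * c + 2) * a ^ 2) * (4 * q a ^ 3 * q'))) a := by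
    exact (((hx4.const_mul 2).mul hq6).sub
      ((hx4.add (hx2.const_mul (4 * c + 2))).mul hq4)).add_const 1
  have hzero : HasDerivAt (fun x => 2 * x ^ 4 * q x ^ 6 - (x ^ 4 + (4 * c + 2) * x ^ 2) * q x ^ 4 + 1)
      0 a := by
    refine (hasDerivAt_const a 0).congr_of_eventuallyEq ?_
    filter_upwards [hs.mem_nhds has] with x hx
    have hx0 : (x : ℝ) ≠ 0 := ne_of_gt (hpos x hx).1
    have h := hcubic x hx
    field_simp at h
    have h2x : (2 * x ^ 2 : ℝ) ≠ 0 := by positivity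
    have hm : (2 * x ^ 4 * q x ^ 6 - (x ^ 4 + (4 * c + 2) * x ^ 2) * q x ^ 4 + 1) * (2 * x ^ 2)
        = 0 := by linear_combination (2 * x ^ 2) * h
    exact (mul_eq_zero.mp hm).resolve_right h2x
  have hD0 : 2 * (4 * a ^ 3) * q a ^ 6 + 2 * a ^ 4 * (6 * q a ^ 5 * q')
      - ((4 * a ^ 3 + (4 * c + 2) * (2 * a)) * q a ^ 4
        + (a ^ 4 + (4 * c + 2) * a ^ 2) * (4 * q a ^ 3 * q')) = 0 :=
    hg.unique hzero
  have h := hcubic a has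
  field_simp at h
  have hc1 : 2 * a ^ 4 * q a ^ 6 - (a ^ 4 + (4 * c + 2) * a ^ 2) * q a ^ 4 + 1 = 0 := by
    have h2a : (2 * a ^ 2 : ℝ) ≠ 0 := by positivity
    have hm : (2 * a ^ 4 * q a ^ 6 - (a ^ 4 + (4 * c + 2) * a ^ 2) * q a ^ 4 + 1) * (2 * a ^ 2)
        = 0 := by linear_combination (2 * a ^ 2) * h
    exact (mul_eq_zero.mp hm).resolve_right h2a
  have hP : 2 * a * q' * (a ^ 4 * q a ^ 6 - 1)
      = q a * (1 + a ^ 4 * q a ^ 4 - 2 * a ^ 4 * q a ^ 6) := by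
    linear_combination (-(q a + 2 * a * q')) * hc1 + (a * q a / 2) * hD0
  have hEne : a ^ 4 * q a ^ 6 - 1 ≠ 0 := by nlinarith
  have hq'v : q' = q a * (1 + a ^ 4 * q a ^ 4 - 2 * a ^ 4 * q a ^ 6)
      / (2 * a * (a ^ 4 * q a ^ 6 - 1)) := by
    rw [eq_div_iff (mul_ne_zero (mul_ne_zero two_ne_zero ha') hEne)]
    linear_combination hP
  -- derivatives of the four factors
  have hA : HasDerivAt (fun x => 1 + x ^ 2 * q x ^ 2 - 2 * x ^ 2 * q x ^ 4)
      (2 * a * q a ^ 2 + a ^ 2 * (2 * q a * q')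
        - (2 * (2 * a) * q a ^ 4 + 2 * a ^ 2 * (4 * q a ^ 3 * q'))) a :=
    ((hx2.mul hq2).const_add 1).sub ((hx2.const_mul 2).mul hq4)
  have hB : HasDerivAt (fun x => 1 + x ^ 2 * q x ^ 2)
      (2 * a * q a ^ 2 + a ^ 2 * (2 * q a * q')) a := (hx2.mul hq2).const_add 1
  have hC : HasDerivAt (fun x => 1 - q x ^ 2) (-(2 * q a * q')) a := hq2.const_sub 1
  have hE : HasDerivAt (fun x => 1 - x ^ 4 * q x ^ 6)
      (-(4 * a ^ 3 * q a ^ 6 + a ^ 4 * (6 * q a ^ 5 * q'))) a := (hx4.mul hq6).const_sub 1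
  have hG := ((((hA.log hApos.ne').const_mul 4).sub
      (((hB.log hBpos.ne').const_mul 4).add
        (((hC.log hCpos.ne').const_mul 3).add (hE.log hEpos.ne')))).const_mul
      ((1:ℝ) / 24))
  have hev : (fun x => Fpre x (q x)) =ᶠ[nhds a] (fun x => (1 / 24) *
      (4 * Real.log (1 + x ^ 2 * q x ^ 2 - 2 * x ^ 2 * q x ^ 4)
        - (4 * Real.log (1 + x ^ 2 * q x ^ 2) + (3 * Real.log (1 - q x ^ 2)
          + Real.log (1 - x ^ 4 * q x ^ 6))))) := by
    filter_upwards [hs.mem_nhds has] with x hx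
    obtain ⟨hx0, hqx, hqx1⟩ := hpos x hx
    have hAx := h2 x hx
    have hEx := h1 x hx
    have hCx : 0 < 1 - q x ^ 2 := by nlinarith
    have hBx : 0 < 1 + x ^ 2 * q x ^ 2 := by positivity
    rw [Fpre, Real.log_div (by positivity) (by positivity),
      Real.log_mul (by positivity) hEx.ne',
      Real.log_mul (by positivity) (by positivity),
      Real.log_pow, Real.log_pow, Real.log_pow]
    push_cast
    ring
  have hfinal := hG.congr_of_eventuallyEq hev
  refine hfinal.congr_deriv ?_
  subst hq'v
  have e1 : (1 + a ^ 2 * q a ^ 2 - 2 * a ^ 2 * q a ^ 4) ≠ 0 := hApos.ne'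
  have e2 : (1 + a ^ 2 * q a ^ 2) ≠ 0 := hBpos.ne'
  have e3 : (1 - q a ^ 2) ≠ 0 := hCpos.ne'
  have e4 : (1 - a ^ 4 * q a ^ 6) ≠ 0 := hEpos.ne'
  field_simp
  ring
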